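/- Let A be a product of order unit spaces A_i for i in an index set I, with componentwise order. Then for a = (a_i), b = (b_i) in the interior of the cone of A, Thompson's metric satisfies d_T(a,b) = sup_{i∈I} d_T^i(a_i, b_i), where d_T^i denotes Thompson's metric on the interior of the cone of A_i. -/

import Mathlib

noncomputable section

variable {A : Type*} [AddCommGroup A] [PartialOrder A] [IsOrderedAddMonoid A] [Module ℝ A]
    [PosSMulStrictMono ℝ A]

/-- `u` is an order unit. -/
def IsOrderUnit {B : Type*} [AddCommGroup B] [PartialOrder B] [IsOrderedAddMonoid B] [Module ℝ B] (u : B) : Prop :=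
  ∀ a : B, ∃ l : ℝ, 0 < l ∧ -(l • u) ≤ a ∧ a ≤ l • u

/-- The order unit (semi)norm. -/
def nu {B : Type*} [AddCommGroup B] [PartialOrder B] [IsOrderedAddMonoid B] [Module ℝ B] (u a : B) : ℝ :=
  sInf {l : ℝ | 0 < l ∧ -(l • u) ≤ a ∧ a ≤ l • u}

/-- The Archimedean property with respect to the order unit `u`. -/
def IsArchimedeanOU {B : Type*} [AddCommGroup B] [PartialOrder B] [IsOrderedAddMonoid B] [Module ℝ B] (u : B) : Prop :=
  ∀ a : B, (∀ n : ℕ, (n : ℝ) • a ≤ u) → a ≤ 0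

/-- `M(a/b)`. -/
def Mrel {B : Type*} [AddCommGroup B] [PartialOrder B] [IsOrderedAddMonoid B] [Module ℝ B] (a b : B) : ℝ :=
  sInf {l : ℝ | 0 < l ∧ a ≤ l • b}

/-- Thompson's metric. -/
def dT {B : Type*} [AddCommGroup B] [PartialOrder B] [IsOrderedAddMonoid B] [Module ℝ B] (a b : B) : ℝ :=
  Real.log (max (Mrel a b) (Mrel b a))

/-- Hilbert's metric. -/
def dH {B : Type*} [AddCommGroup B] [PartialOrder B] [IsOrderedAddMonoid B] [Module ℝ B] (a b : B) : ℝ :=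
  Real.log (Mrel a b * Mrel b a)

/-!
Since `a ≤ λ • b` in the product exactly when it holds in every factor, `M(a/b)` is the supremum
of the componentwise `M(aᵢ/bᵢ)`, and the maximum of two suprema is the supremum of the maxima.
It remains to commute `log` with the supremum. Each `zᵢ = max (M(aᵢ/bᵢ)) (M(bᵢ/aᵢ))` is either `0`
(then `aᵢ = bᵢ = 0`) or at least `1`, since otherwise `aᵢ ≤ t • bᵢ ≤ t² • aᵢ` with `t < 1`.
On `{0} ∪ [1, ∞)` the logarithm agrees with `log ∘ max 1`, which is monotone and continuous.
-/

open Set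

section Mrel

variable {B : Type*} [AddCommGroup B] [PartialOrder B] [IsOrderedAddMonoid B] [Module ℝ B]
  {a b : B} {l L K : ℝ}

lemma Mrel_nonneg (a b : B) : 0 ≤ Mrel a b :=
  Real.sInf_nonneg fun _ hl => hl.1.le

lemma Mrel_le (hl : 0 < l) (h : a ≤ l • b) : Mrel a b ≤ l :=
  csInf_le ⟨0, fun _ hx => hx.1.le⟩ ⟨hl, h⟩

lemma Mrel_zero_zero : Mrel (0 : B) 0 = 0 := by
  simp only [Mrel, smul_zero, le_refl, and_true]
  exact csInf_Ioi

variable [PosSMulMono ℝ B]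

lemma le_smul_of_Mrel_lt (hb : 0 ≤ b) (hL : 0 < L) (hab : a ≤ L • b) (h : Mrel a b < l) :
    a ≤ l • b := by
  obtain ⟨μ, ⟨-, haμ⟩, hμl⟩ := exists_lt_of_csInf_lt (s := {l | 0 < l ∧ a ≤ l • b}) ⟨L, hL, hab⟩ h
  exact haμ.trans (smul_le_smul_of_nonneg_right hμl.le hb)

lemma nonpos_of_le_smul_self (hl : l < 1) (h : a ≤ l • a) : a ≤ 0 := by
  refine nonpos_of_smul_nonpos_of_pos_left (a := 1 - l) ?_ (sub_pos.2 hl)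
  rwa [sub_smul, one_smul, sub_nonpos]

lemma max_Mrel_eq_zero_or_one_le (ha : 0 ≤ a) (hb : 0 ≤ b) (hL : 0 < L) (hab : a ≤ L • b)
    (hK : 0 < K) (hba : b ≤ K • a) :
    max (Mrel a b) (Mrel b a) = 0 ∨ 1 ≤ max (Mrel a b) (Mrel b a) := by
  rcases eq_or_ne a 0 with rfl | ha0
  · obtain rfl : b = 0 := le_antisymm (by simpa using hba) hb
    simp [Mrel_zero_zero]
  refine Or.inr (le_of_not_gt fun hlt => ha0 (le_antisymm ?_ ha))
  obtain ⟨t, hMt, ht1⟩ := exists_between hlt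
  have ht0 : 0 ≤ t := (Mrel_nonneg a b).trans ((le_max_left _ _).trans hMt.le)
  have hat : a ≤ t • b := le_smul_of_Mrel_lt hb hL hab ((le_max_left _ _).trans_lt hMt)
  have hbt : b ≤ t • a := le_smul_of_Mrel_lt ha hK hba ((le_max_right _ _).trans_lt hMt)
  refine nonpos_of_le_smul_self (l := t * t) (by nlinarith) ?_
  calc a ≤ t • b := hat
    _ ≤ t • t • a := smul_le_smul_of_nonneg_left hbt ht0
    _ = (t * t) • a := smul_smul t t a

end Mrel

section Pi

variable {ι : Type*} {A : ι → Type*} [∀ i, AddCommGroup (A i)] [∀ i, PartialOrder (A i)]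
  [∀ i, IsOrderedAddMonoid (A i)] [∀ i, Module ℝ (A i)] {a b : ∀ i, A i} {L : ℝ}

lemma bddAbove_range_Mrel_apply (hL : 0 < L) (hab : a ≤ L • b) :
    BddAbove (range fun i => Mrel (a i) (b i)) :=
  ⟨L, forall_mem_range.2 fun i => Mrel_le hL (hab i)⟩

lemma Mrel_pi [∀ i, PosSMulMono ℝ (A i)] (hb : 0 ≤ b) (hL : 0 < L) (hab : a ≤ L • b) :
    Mrel a b = ⨆ i, Mrel (a i) (b i) := by
  refine le_antisymm (le_of_forall_gt_imp_ge_of_dense fun l hl => ?_) ?_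
  · have hl0 : 0 < l := (Real.iSup_nonneg fun i => Mrel_nonneg (a i) (b i)).trans_lt hl
    refine Mrel_le hl0 fun i => le_smul_of_Mrel_lt (hb i) hL (hab i) ?_
    exact (le_ciSup (bddAbove_range_Mrel_apply hL hab) i).trans_lt hl
  · refine Real.iSup_le (fun i => csInf_le_csInf ⟨0, fun _ hx => hx.1.le⟩ ⟨L, hL, hab⟩ ?_)
      (Mrel_nonneg a b)
    exact fun l ⟨hl, hal⟩ => ⟨hl, hal i⟩

end Pi

lemma log_ciSup_of_eq_zero_or_one_le {ι : Type*} [Nonempty ι] {z : ι → ℝ}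
    (hbdd : BddAbove (range z)) (hz : ∀ i, z i = 0 ∨ 1 ≤ z i) :
    Real.log (⨆ i, z i) = ⨆ i, Real.log (z i) := by
  have hlog : ∀ x : ℝ, x = 0 ∨ 1 ≤ x → Real.log (max 1 x) = Real.log x := by
    rintro x (rfl | hx)
    · simp
    · rw [max_eq_right hx]
  have hsup : (⨆ i, z i) = 0 ∨ 1 ≤ ⨆ i, z i := by
    by_cases h : ∃ i, 1 ≤ z i
    · obtain ⟨i, hi⟩ := h
      exact Or.inr (hi.trans (le_ciSup hbdd i))
    · have hzero : ∀ i, z i = 0 := fun i => (hz i).resolve_right fun hi => h ⟨i, hi⟩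
      simp [hzero]
  have hmono : Monotone fun x : ℝ => Real.log (max 1 x) := fun x y hxy =>
    Real.log_le_log (by positivity) (max_le_max le_rfl hxy)
  rw [← hlog _ hsup, hmono.map_ciSup_of_continuousAt (by fun_prop (disch := positivity)) hbdd]
  simp only [hlog _ (hz _)]

theorem stmt6_general {I : Type*} [Nonempty I] {A : I → Type*} [∀ i, AddCommGroup (A i)]
    [∀ i, PartialOrder (A i)] [∀ i, IsOrderedAddMonoid (A i)]
    [∀ i, Module ℝ (A i)] [∀ i, PosSMulStrictMono ℝ (A i)]
    (a b : ∀ i, A i) (ha0 : 0 ≤ a) (hb0 : 0 ≤ b)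
    (ha : IsOrderUnit a) (hb : IsOrderUnit b) :
    dT a b = ⨆ i, dT (a i) (b i) := by
  obtain ⟨L, hL, -, hab⟩ := hb a
  obtain ⟨K, hK, -, hba⟩ := ha b
  have hbddM := bddAbove_range_Mrel_apply hL hab
  have hbddN := bddAbove_range_Mrel_apply hK hba
  rw [dT, Mrel_pi hb0 hL hab, Mrel_pi ha0 hK hba, ← ciSup_sup_eq hbddM hbddN]
  exact log_ciSup_of_eq_zero_or_one_le (bbdAbove_range_sup hbddM hbddN)
    fun i => max_Mrel_eq_zero_or_one_le (ha0 i) (hb0 i) hL (hab i) hK (hba i)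

/-- Thompson's metric on a product of order unit spaces is the supremum of the
componentwise Thompson's metrics. -/
theorem stmt6 {I : Type*} [Nonempty I] {A : I → Type*} [∀ i, AddCommGroup (A i)]
    [∀ i, PartialOrder (A i)] [∀ i, IsOrderedAddMonoid (A i)]
    [∀ i, Module ℝ (A i)] [∀ i, PosSMulStrictMono ℝ (A i)]
    (u : ∀ i, A i) (hu0 : ∀ i, 0 ≤ u i) (hu : ∀ i, IsOrderUnit (u i))
    (harch : ∀ i, IsArchimedeanOU (u i))
    (a b : ∀ i, A i) (ha0 : 0 ≤ a) (hb0 : 0 ≤ b)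
    (ha : IsOrderUnit a) (hb : IsOrderUnit b) :
    dT a b = ⨆ i, dT (a i) (b i) :=
  stmt6_general a b ha0 hb0 ha hb
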